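/- arXiv:1912.03111 — 2 statements merged into one kernel-verified Lean document; each statement's English description precedes it below -/
import Mathlib

section
/- Let a, b, c, m, c0, s0, f0, w0 be real numbers with a·s0 + b·w0 < f0 ≤ m·s0. Set den := b·w0 − s0·(m−a), a' := (m·b·w0 − f0·(m−a))/den, b' := (b·f0 − m·b·s0)/den, λ := (f0 − m·s0)/den, μ := (a·s0 + b·w0 − f0)/den, and c' := λ·c + μ·c0. Then for all real numbers s, f, w with f ≤ a·s + b·w + c and f ≤ m·s + c0, one has f ≤ a'·s + b'·w + c'. -/
noncomputable def den (a b m s0 w0 : ℝ) : ℝ := b * w0 - s0 * (m - a)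

noncomputable def aPrime (a b m s0 f0 w0 : ℝ) : ℝ :=
  (m * b * w0 - f0 * (m - a)) / den a b m s0 w0

noncomputable def bPrime (a b m s0 f0 w0 : ℝ) : ℝ :=
  (b * f0 - m * b * s0) / den a b m s0 w0

noncomputable def lam (a b m s0 f0 w0 : ℝ) : ℝ :=
  (f0 - m * s0) / den a b m s0 w0

noncomputable def mu (a b m s0 f0 w0 : ℝ) : ℝ :=
  (a * s0 + b * w0 - f0) / den a b m s0 w0

noncomputable def cPrime (a b c m c0 s0 f0 w0 : ℝ) : ℝ :=
  lam a b m s0 f0 w0 * c + mu a b m s0 f0 w0 * c0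

/-!
The new plane is the convex combination `λ · (first plane) + μ · (second plane)`: indeed
`a' = λ a + μ m`, `b' = λ b` and `c' = λ c + μ c0`. The hypotheses make the numerators of `λ` and
`μ` non-positive and their sum `den` negative, so `λ, μ ≥ 0` and `λ + μ = 1`. A point below both
planes therefore lies below every convex combination of them.
-/

section NewPlane

variable {a b c m c0 s0 f0 w0 : ℝ}

theorem den_neg (h1 : a * s0 + b * w0 < f0) (h2 : f0 ≤ m * s0) : den a b m s0 w0 < 0 := by
  unfold den
  linarith

theorem lam_nonneg (h2 : f0 ≤ m * s0) (hden : den a b m s0 w0 < 0) :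
    0 ≤ lam a b m s0 f0 w0 :=
  div_nonneg_of_nonpos (by linarith) hden.le

theorem mu_nonneg (h1 : a * s0 + b * w0 < f0) (hden : den a b m s0 w0 < 0) :
    0 ≤ mu a b m s0 f0 w0 :=
  div_nonneg_of_nonpos (by linarith) hden.le

theorem lam_add_mu (hden : den a b m s0 w0 ≠ 0) :
    lam a b m s0 f0 w0 + mu a b m s0 f0 w0 = 1 := by
  rw [lam, mu, ← add_div, div_eq_one_iff_eq hden, den]
  ring

theorem aPrime_eq : aPrime a b m s0 f0 w0 = lam a b m s0 f0 w0 * a + mu a b m s0 f0 w0 * m := by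
  rw [aPrime, lam, mu, div_mul_eq_mul_div, div_mul_eq_mul_div, ← add_div]
  ring

theorem bPrime_eq : bPrime a b m s0 f0 w0 = lam a b m s0 f0 w0 * b := by
  rw [bPrime, lam, div_mul_eq_mul_div]
  ring

theorem newPlane_eq (s w : ℝ) :
    aPrime a b m s0 f0 w0 * s + bPrime a b m s0 f0 w0 * w + cPrime a b c m c0 s0 f0 w0 =
      lam a b m s0 f0 w0 * (a * s + b * w + c) + mu a b m s0 f0 w0 * (m * s + c0) := by
  rw [aPrime_eq, bPrime_eq, cPrime]
  ring

end NewPlane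

/-- if `a·s0 + b·w0 < f0 ≤ m·s0`, then every `(s, f, w)` lying
below both planes `f = a·s + b·w + c` and `f = m·s + c0` also lies below the
new plane `f = a'·s + b'·w + c'`. -/
theorem below_both_planes_implies_below_new_plane
    (a b c m c0 s0 f0 w0 : ℝ)
    (h1 : a * s0 + b * w0 < f0) (h2 : f0 ≤ m * s0) :
    ∀ s f w : ℝ, f ≤ a * s + b * w + c → f ≤ m * s + c0 →
      f ≤ aPrime a b m s0 f0 w0 * s + bPrime a b m s0 f0 w0 * w +
        cPrime a b c m c0 s0 f0 w0 := by
  intro s f w below_first below_second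
  have hden := den_neg h1 h2
  have combo := convex_Ici f below_first below_second (lam_nonneg h2 hden) (mu_nonneg h1 hden)
    (lam_add_mu hden.ne)
  rw [newPlane_eq]
  simpa only [smul_eq_mul, Set.mem_Ici] using combo
end

section
/- Fix d0 = (s0, f0, w0) ∈ ℤ³ with s0, f0, w0 all positive, and let M be a ℤ³-graded 𝔽₂[X]-module with X of degree d0. Let a, b, c, m, c0 be real numbers with f0 ≤ m·s0, and suppose M is generated as an 𝔽₂[X]-module by homogeneous elements each of whose degrees (s,f,w) satisfies both f ≤ a·s + b·w + c and f ≤ m·s + c0. If X^n·M = 0 for some n ≥ 1, then M_{(s,f,w)} = 0 for every (s,f,w) with f > a·s + b·w + c + (n−1)·max(0, f0 − a·s0 − b·w0), and M_{(s,f,w)} = 0 for every (s,f,w) with f > m·s + c0. -/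
/-!
Over `𝔽₂` every polynomial is a sum of powers of `X`, and `X ^ n` acts as zero, so `M` is
additively generated by the elements `X ^ k • g` with `k < n` and `g` a homogeneous generator.
Such an element has degree `deg g + k • d0`, and for `k ≤ n - 1` this degree still lies below
both planes, the first one shifted up by `(n - 1) · max 0 (f0 - a·s0 - b·w0)`; the second one
needs no shift because `d0` itself lies below it (`f0 ≤ m·s0`). A graded piece in whose degree
none of these generators lives must vanish.
-/

open Polynomial

theorem iSupIndep.eq_bot_of_closure_eq_top {ι G : Type*} [AddCommGroup G]
    {A : ι → AddSubgroup G} (hA : iSupIndep A) {T : Set G} (hT : AddSubgroup.closure T = ⊤)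
    {i : ι} (hi : ∀ x ∈ T, ∃ j ≠ i, x ∈ A j) : A i = ⊥ := by
  refine (hA i).eq_bot_of_le ?_
  calc A i ≤ AddSubgroup.closure T := hT ▸ le_top
    _ ≤ ⨆ (j) (_ : j ≠ i), A j := AddSubgroup.closure_le _ |>.mpr fun x hx ↦ by
      obtain ⟨j, hji, hxj⟩ := hi x hx
      exact AddSubgroup.mem_iSup_of_mem j (AddSubgroup.mem_iSup_of_mem hji hxj)

theorem pow_smul_mem_of_smul_mem {ι R M : Type*} [AddMonoid ι] [Monoid R] [AddCommGroup M]
    [DistribMulAction R M] {A : ι → AddSubgroup M} {r : R} {d₀ : ι}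
    (hr : ∀ d, ∀ x ∈ A d, r • x ∈ A (d + d₀)) (k : ℕ) {d : ι} {x : M}
    (hx : x ∈ A d) :
    r ^ k • x ∈ A (d + k • d₀) := by
  induction k with
  | zero => simpa using hx
  | succ k ih => simpa [pow_succ', mul_smul, succ_nsmul, ← add_assoc] using hr _ _ ih

theorem ZMod.polynomial_smul_mem_closure_X_pow_smul {q : ℕ} [NeZero q] {M : Type*}
    [AddCommGroup M] [Module (ZMod q)[X] M] (p : (ZMod q)[X]) (x : M) :
    p • x ∈ AddSubgroup.closure (Set.range fun k : ℕ ↦ (X : (ZMod q)[X]) ^ k • x) := by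
  rw [p.as_sum_support, Finset.sum_smul]
  refine AddSubgroup.sum_mem _ fun k _ ↦ ?_
  rw [← C_mul_X_pow_eq_monomial, ← ZMod.natCast_zmod_val (p.coeff k), map_natCast, mul_smul,
    Nat.cast_smul_eq_nsmul]
  exact AddSubgroup.nsmul_mem _ (AddSubgroup.subset_closure (Set.mem_range_self k)) _

theorem ZMod.closure_X_pow_smul_eq_top {q : ℕ} [NeZero q] {M : Type*} [AddCommGroup M]
    [Module (ZMod q)[X] M] {S : Set M} (hS : Submodule.span (ZMod q)[X] S = ⊤) {n : ℕ}
    (hnil : ∀ x : M, (X ^ n : (ZMod q)[X]) • x = 0) :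
    AddSubgroup.closure {y | ∃ k < n, ∃ g ∈ S, (X : (ZMod q)[X]) ^ k • g = y} = ⊤ := by
  set N := AddSubgroup.closure {y | ∃ k < n, ∃ g ∈ S, (X : (ZMod q)[X]) ^ k • g = y}
  have hgen (p : (ZMod q)[X]) {g : M} (hg : g ∈ S) : p • g ∈ N := by
    refine AddSubgroup.closure_le _ |>.mpr ?_ (ZMod.polynomial_smul_mem_closure_X_pow_smul p g)
    rintro _ ⟨k, rfl⟩
    rcases lt_or_ge k n with hk | hk
    · exact AddSubgroup.subset_closure ⟨k, hk, g, hg, rfl⟩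
    · change X ^ k • g ∈ N
      rw [← Nat.sub_add_cancel hk, pow_add, mul_smul, hnil, smul_zero]
      exact N.zero_mem
  let N' : Submodule (ZMod q)[X] M :=
    { N with
      smul_mem' := fun p y hy ↦ by
        induction hy using AddSubgroup.closure_induction with
        | mem _ hz =>
          obtain ⟨k, -, g, hg, rfl⟩ := hz
          rw [smul_smul]
          exact hgen _ hg
        | zero => rw [smul_zero]; exact N.zero_mem
        | add _ _ _ _ hy hz => rw [smul_add]; exact N.add_mem hy hz
        | neg _ _ hy => rw [smul_neg]; exact N.neg_mem hy }
  have hSN : S ⊆ N' := fun g hg ↦ (by simpa using hgen 1 hg : g ∈ N)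
  exact eq_top_iff.mpr fun y _ ↦ Submodule.span_le.mpr hSN (hS ▸ Submodule.mem_top)

theorem le_plane_add_mul {a b c s f w s₀ f₀ w₀ k N : ℝ} (hf : f ≤ a * s + b * w + c)
    (hk₀ : 0 ≤ k) (hk : k ≤ N) :
    f + k * f₀ ≤
      a * (s + k * s₀) + b * (w + k * w₀) + c + N * max 0 (f₀ - a * s₀ - b * w₀) := by
  have hmax := le_max_right 0 (f₀ - a * s₀ - b * w₀)
  nlinarith [mul_le_mul_of_nonneg_left hmax hk₀,
    mul_le_mul_of_nonneg_right hk (le_max_left 0 (f₀ - a * s₀ - b * w₀))]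

theorem le_line_add_mul {m c s f s₀ f₀ k : ℝ} (hf : f ≤ m * s + c) (hk₀ : 0 ≤ k)
    (h₀ : f₀ ≤ m * s₀) : f + k * f₀ ≤ m * (s + k * s₀) + c := by
  nlinarith [mul_le_mul_of_nonneg_left h₀ hk₀]

theorem graded_module_vanishing_nilpotent_general
    (s0 f0 w0 : ℤ)
    (M : Type) [AddCommGroup M] [Module (Polynomial (ZMod 2)) M]
    (𝒜 : ℤ × ℤ × ℤ → AddSubgroup M)
    (hdecomp : DirectSum.IsInternal 𝒜)
    (hX : ∀ (d : ℤ × ℤ × ℤ) (x : M), x ∈ 𝒜 d →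
      (Polynomial.X : Polynomial (ZMod 2)) • x ∈ 𝒜 (d.1 + s0, d.2.1 + f0, d.2.2 + w0))
    (a b c m c0 : ℝ) (h2 : (f0 : ℝ) ≤ m * s0)
    (hgen : Submodule.span (Polynomial (ZMod 2))
      {x : M | ∃ s f w : ℤ, x ∈ 𝒜 (s, f, w) ∧
        (f : ℝ) ≤ a * s + b * w + c ∧ (f : ℝ) ≤ m * s + c0} = ⊤)
    (n : ℕ)
    (hnil : ∀ x : M, (Polynomial.X ^ n : Polynomial (ZMod 2)) • x = 0) :
    (∀ s f w : ℤ,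
        (f : ℝ) > a * s + b * w + c +
          ((n : ℝ) - 1) * max 0 ((f0 : ℝ) - a * s0 - b * w0) →
        𝒜 (s, f, w) = ⊥) ∧
      (∀ s f w : ℤ, (f : ℝ) > m * s + c0 → 𝒜 (s, f, w) = ⊥) := by
  have hclosure := ZMod.closure_X_pow_smul_eq_top hgen hnil
  have hvanish {s f w : ℤ} (hbound : ∀ k < n, ∀ s' f' w' : ℤ,
      (f' : ℝ) ≤ a * s' + b * w' + c → (f' : ℝ) ≤ m * s' + c0 →
        (s' : ℝ) + k * s0 = s → (w' : ℝ) + k * w0 = w → (f' : ℝ) + k * f0 < f) :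
      𝒜 (s, f, w) = ⊥ := by
    refine hdecomp.addSubgroup_iSupIndep.eq_bot_of_closure_eq_top hclosure ?_
    rintro _ ⟨k, hk, g, ⟨s', f', w', hg, hg₁, hg₂⟩, rfl⟩
    refine ⟨_, fun hdeg ↦ ?_, pow_smul_mem_of_smul_mem (d₀ := (s0, f0, w0)) hX k hg⟩
    simp only [Prod.ext_iff, Prod.smul_mk, Prod.mk_add_mk, nsmul_eq_mul] at hdeg
    obtain ⟨rfl, rfl, rfl⟩ := hdeg
    have := hbound k hk s' f' w' hg₁ hg₂ (by push_cast; rfl) (by push_cast; rfl)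
    push_cast at this
    exact this.false
  refine ⟨fun s f w hf ↦ hvanish fun k hk s' f' w' h₁ _ hs hw ↦ ?_,
    fun s f w hf ↦ hvanish fun k _ s' f' w' _ h₂ hs _ ↦ ?_⟩
  · have hkn : (k : ℝ) ≤ n - 1 := by
      rw [le_sub_iff_add_le]; exact_mod_cast hk
    have := le_plane_add_mul (s₀ := s0) (f₀ := f0) (w₀ := w0) h₁ k.cast_nonneg hkn
    rw [hs, hw] at this
    linarith
  · have := le_line_add_mul h₂ k.cast_nonneg h2
    rw [hs] at this
    linarith

/-- 'β acts nilpotently' branch of case (1) of Theorem 4.7: let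
`M` be a `ℤ³`-graded `𝔽₂[X]`-module with `X` of degree `d0 = (s0,f0,w0)`,
`s0,f0,w0 > 0`, generated by homogeneous elements whose degrees lie below the
planes `f = a·s + b·w + c` and `f = m·s + c0`, with `f0 ≤ m·s0`.  If
`X^n · M = 0` for some `n ≥ 1`, then `M_{(s,f,w)} = 0` whenever
`f > a·s + b·w + c + (n−1)·max(0, f0 − a·s0 − b·w0)`, and whenever
`f > m·s + c0`. -/
theorem graded_module_vanishing_nilpotent
    (s0 f0 w0 : ℤ) (hs0 : 0 < s0) (hf0 : 0 < f0) (hw0 : 0 < w0)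
    (M : Type) [AddCommGroup M] [Module (Polynomial (ZMod 2)) M]
    (𝒜 : ℤ × ℤ × ℤ → AddSubgroup M)
    (hdecomp : DirectSum.IsInternal 𝒜)
    (hX : ∀ (d : ℤ × ℤ × ℤ) (x : M), x ∈ 𝒜 d →
      (Polynomial.X : Polynomial (ZMod 2)) • x ∈ 𝒜 (d.1 + s0, d.2.1 + f0, d.2.2 + w0))
    (a b c m c0 : ℝ) (h2 : (f0 : ℝ) ≤ m * s0)
    (hgen : Submodule.span (Polynomial (ZMod 2))
      {x : M | ∃ s f w : ℤ, x ∈ 𝒜 (s, f, w) ∧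
        (f : ℝ) ≤ a * s + b * w + c ∧ (f : ℝ) ≤ m * s + c0} = ⊤)
    (n : ℕ) (hn : 1 ≤ n)
    (hnil : ∀ x : M, (Polynomial.X ^ n : Polynomial (ZMod 2)) • x = 0) :
    (∀ s f w : ℤ,
        (f : ℝ) > a * s + b * w + c +
          ((n : ℝ) - 1) * max 0 ((f0 : ℝ) - a * s0 - b * w0) →
        𝒜 (s, f, w) = ⊥) ∧
      (∀ s f w : ℤ, (f : ℝ) > m * s + c0 → 𝒜 (s, f, w) = ⊥) :=
  graded_module_vanishing_nilpotent_general s0 f0 w0 M 𝒜 hdecomp hX a b c m c0 h2 hgen n hnil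
end
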